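/- For every n ≥ 1 there exists an ordering T_1, T_2, ..., T_N of all ordered trees with exactly n vertices (N the number of such trees) such that for each i, T_{i+1} is obtained from T_i by deleting one leaf and appending one leaf elsewhere. -/

import Mathlib

/-- An ordered (plane) tree: a root together with the list of subtrees of its
children.  The children are listed **rightmost first** (so the head of the
list is the rightmost child). -/
inductive OTree : Type
  | node : List OTree → OTree

namespace OTree

-- Number of vertices of an ordered tree.
mutual
  def size : OTree → ℕ
    | .node ts => 1 + sizeAux ts
  def sizeAux : List OTree → ℕ
    | [] => 0
    | t :: ts => size t + sizeAux ts
end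

/-- `rpl T` is the number of edges of the rightmost path of `T`
(the path from the root that always follows the rightmost child). -/
def rpl : OTree → ℕ
  | .node [] => 0
  | .node (t :: _) => 1 + rpl t

/-- `p T` removes the rightmost leaf of `T` (the endpoint of the rightmost
path).  On the one-vertex tree it is the identity (junk value). -/
def p : OTree → OTree
  | .node [] => .node []
  | .node (.node [] :: ts) => .node ts
  | .node (.node (c :: cs) :: ts) => .node (p (.node (c :: cs)) :: ts)

/-- `C T i` appends a new leaf as the rightmost child of the vertex at
level `i` on the rightmost path of `T` (the root has level 1).
Junk values are returned when `i = 0` or `i` exceeds `rpl T + 1`. -/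
def C : OTree → ℕ → OTree
  | t, 0 => t
  | .node ts, 1 => .node (.node [] :: ts)
  | .node [], _ + 2 => .node []
  | .node (t :: ts), n + 2 => .node (C t (n + 1) :: ts)

/-- The number of children of the parent of the rightmost leaf
(junk value `0` on the one-vertex tree, which has no such parent). -/
def rmlParentDeg : OTree → ℕ
  | .node [] => 0
  | .node (.node [] :: ts) => ts.length + 1
  | .node (.node (c :: cs) :: _) => rmlParentDeg (.node (c :: cs))

/-- `T` has the pony-tail if the rightmost child of the root has exactly one
child, which is a leaf. -/
def ponyTail : OTree → Prop
  | .node (.node [.node []] :: _) => True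
  | _ => False

end OTree

/-- `AppendLeaf T T'` holds when `T'` is obtained from `T` by attaching one
new leaf to some vertex of `T`, at some position among its children. -/
inductive AppendLeaf : OTree → OTree → Prop
  | root (l r : List OTree) :
      AppendLeaf (.node (l ++ r)) (.node (l ++ OTree.node [] :: r))
  | child (l r : List OTree) (t t' : OTree) :
      AppendLeaf t t' → AppendLeaf (.node (l ++ t :: r)) (.node (l ++ t' :: r))

/-- `DelApp T T'` holds when `T'` can be obtained from `T` by deleting one
leaf and then appending one new leaf somewhere (delete-and-append a leaf). -/
def DelApp (T T' : OTree) : Prop :=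
  ∃ S : OTree, AppendLeaf S T ∧ AppendLeaf S T'

/-- `CopyingAt T T' j` : `T` is copying `T'` at level `j`, i.e. `T'` is
obtained from `T` by appending a new leaf which becomes the rightmost leaf of
`T'` (namely forming `C T j`, whose rightmost path has `j` edges) and then
removing some other leaf. -/
def CopyingAt (T T' : OTree) (j : ℕ) : Prop :=
  T ≠ T' ∧ 1 ≤ j ∧ j ≤ T.rpl + 1 ∧ T'.rpl = j ∧ AppendLeaf T' (T.C j)

/-- `T` is copying `T'`. -/
def Copying (T T' : OTree) : Prop := ∃ j : ℕ, CopyingAt T T' j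


/-!
Every tree `U` with at least two vertices is `C (p U) (rpl U)`: it is obtained from its
parent `p U` by hanging a new rightmost leaf at some level of the rightmost path of `p U`.
So the trees with `n + 1` vertices split into blocks, one for each tree `S` with `n`
vertices, consisting of `C S 1, …, C S (rpl S + 1)`; any two trees in a block share the
parent `S`. The Gray code for `n + 1` walks through the blocks in the order of the Gray
code for `n`, where consecutive trees of that code are required to *copy* one another: if
`T` copies `T'`, then `T'` is a leaf-deletion of `C T (rpl T')`, so leaving the block of
`T` at level `rpl T'` one may enter the block of `T'` at any level. Each such junction
fixes the last level of one block or the first level of the next, and the levels inside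
each block can be ordered so that consecutive trees of the new code copy one another
again, without two of these constraints ever colliding.
-/

namespace OTree

@[simp] lemma size_node (ts : List OTree) : size (node ts) = 1 + sizeAux ts := by rw [size]

@[simp] lemma sizeAux_nil : sizeAux [] = 0 := rfl

@[simp] lemma sizeAux_cons (t : OTree) (ts : List OTree) :
    sizeAux (t :: ts) = size t + sizeAux ts := rfl

@[simp] lemma rpl_node_nil : rpl (node []) = 0 := rfl

@[simp] lemma rpl_node_cons (t : OTree) (ts : List OTree) : rpl (node (t :: ts)) = 1 + rpl t :=
  rfl

lemma rpl_eq_zero_iff {T : OTree} : rpl T = 0 ↔ T = node [] := by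
  rcases T with ⟨_ | ⟨t, ts⟩⟩ <;> simp

lemma one_le_size (T : OTree) : 1 ≤ size T := by
  cases T
  simp

lemma size_eq_one_iff {T : OTree} : size T = 1 ↔ T = node [] := by
  refine ⟨fun h => ?_, by rintro rfl; rfl⟩
  rcases T with ⟨_ | ⟨t, ts⟩⟩
  · rfl
  · have := one_le_size t
    simp at h
    omega

lemma one_le_rpl_of_two_le_size {T : OTree} (h : 2 ≤ size T) : 1 ≤ rpl T := by
  rcases T with ⟨_ | ⟨t, ts⟩⟩ <;> simp_all

lemma C_one (ts : List OTree) : C (node ts) 1 = node (node [] :: ts) := by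
  cases ts <;> rfl

lemma C_node_cons_succ (t : OTree) (ts : List OTree) {k : ℕ} (hk : 1 ≤ k) :
    C (node (t :: ts)) (k + 1) = node (C t k :: ts) := by
  obtain ⟨k, rfl⟩ := Nat.exists_eq_add_of_le' hk
  rfl

lemma p_node_cons {U : OTree} (hU : U ≠ node []) (ts : List OTree) :
    p (node (U :: ts)) = node (p U :: ts) := by
  rcases U with ⟨_ | ⟨c, cs⟩⟩
  · exact absurd rfl hU
  · rfl

section C

variable {T : OTree} {j : ℕ}

theorem rpl_C (h1 : 1 ≤ j) (h2 : j ≤ rpl T + 1) : rpl (C T j) = j := by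
  fun_induction C T j <;> simp_all
  all_goals omega

theorem size_C (h1 : 1 ≤ j) (h2 : j ≤ rpl T + 1) : size (C T j) = size T + 1 := by
  fun_induction C T j <;> simp_all
  all_goals omega

theorem p_C (h1 : 1 ≤ j) (h2 : j ≤ rpl T + 1) : p (C T j) = T := by
  fun_induction C T j with
  | case1 => omega
  | case2 ts => cases ts <;> rfl
  | case3 => simp at h2
  | case4 t ts n ih =>
    simp only [rpl_node_cons] at h2
    have hr : rpl (C t (n + 1)) = n + 1 := rpl_C (by omega) (by omega)
    rw [p_node_cons (fun h => by simp [h] at hr), ih (by omega) (by omega)]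

theorem appendLeaf_C (h1 : 1 ≤ j) (h2 : j ≤ rpl T + 1) : AppendLeaf T (C T j) := by
  fun_induction C T j with
  | case1 => omega
  | case2 ts => exact AppendLeaf.root [] ts
  | case3 => simp at h2
  | case4 t ts n ih =>
    exact AppendLeaf.child [] ts _ _ (ih (by omega) (by simp at h2; omega))

end C

section p

variable {U : OTree}

theorem C_p (hU : U ≠ node []) : C (p U) (rpl U) = U := by
  fun_induction p U with
  | case1 => exact absurd rfl hU
  | case2 ts => simp only [rpl_node_cons, rpl_node_nil]; exact C_one ts
  | case3 c cs ts ih =>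
    simp only [rpl_node_cons] at ih ⊢
    rw [show 1 + (1 + rpl c) = (1 + rpl c) + 1 by omega, C_node_cons_succ _ _ (by omega),
      ih (by simp)]

theorem size_p (hU : U ≠ node []) : size (p U) + 1 = size U := by
  fun_induction p U <;> simp_all
  all_goals omega

theorem rpl_le_rpl_p_add_one (U : OTree) : rpl U ≤ rpl (p U) + 1 := by
  fun_induction p U <;> simp_all
  all_goals omega

end p

def children (S : OTree) : List OTree :=
  (List.range' 1 (rpl S + 1)).map (C S)

lemma mem_children {S U : OTree} :
    U ∈ children S ↔ ∃ j, 1 ≤ j ∧ j ≤ rpl S + 1 ∧ C S j = U := by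
  simp only [children, List.mem_map, List.mem_range'_1]
  constructor
  · rintro ⟨j, hj, rfl⟩
    exact ⟨j, by omega, by omega, rfl⟩
  · rintro ⟨j, h1, h2, rfl⟩
    exact ⟨j, by omega, rfl⟩

lemma nodup_children (S : OTree) : (children S).Nodup := by
  refine List.Nodup.map_on (fun x hx y hy hxy => ?_) List.nodup_range'
  rw [List.mem_range'_1] at hx hy
  rw [← rpl_C (T := S) (j := x) (by omega) (by omega), hxy, rpl_C (by omega) (by omega)]

lemma p_of_mem_children {S U : OTree} (h : U ∈ children S) : p U = S := by
  obtain ⟨j, h1, h2, rfl⟩ := mem_children.1 h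
  exact p_C h1 h2

lemma mem_children_p {U : OTree} (hU : U ≠ node []) : U ∈ children (p U) :=
  mem_children.2 ⟨rpl U, Nat.one_le_iff_ne_zero.2 (mt rpl_eq_zero_iff.1 hU),
    rpl_le_rpl_p_add_one U, C_p hU⟩

lemma nodup_flatMap_children {L : List OTree} (hL : L.Nodup) : (L.flatMap children).Nodup :=
  List.nodup_flatMap.2 ⟨fun S _ => nodup_children S, hL.imp fun hne _ h h' =>
    hne ((p_of_mem_children h).symm.trans (p_of_mem_children h'))⟩

lemma mem_flatMap_children_iff {L : List OTree} {n : ℕ} (hn : 1 ≤ n)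
    (hL : ∀ S, S ∈ L ↔ size S = n) (U : OTree) :
    U ∈ L.flatMap children ↔ size U = n + 1 := by
  simp only [List.mem_flatMap]
  constructor
  · rintro ⟨S, hS, hU⟩
    obtain ⟨j, h1, h2, rfl⟩ := mem_children.1 hU
    rw [size_C h1 h2, (hL S).1 hS]
  · intro hU
    have hne : U ≠ node [] := by rintro rfl; simp at hU; omega
    exact ⟨p U, (hL _).2 (by have := size_p hne; omega), mem_children_p hne⟩

end OTree

open OTree

lemma DelApp.symm {T T' : OTree} (h : DelApp T T') : DelApp T' T :=
  let ⟨S, hT, hT'⟩ := h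
  ⟨S, hT', hT⟩

lemma AppendLeaf.cons {ts us : List OTree} (h : AppendLeaf (node ts) (node us)) (s : OTree) :
    AppendLeaf (node (s :: ts)) (node (s :: us)) := by
  cases h with
  | root l r => exact AppendLeaf.root (s :: l) r
  | child l r t t' h => exact AppendLeaf.child (s :: l) r t t' h

/-- Children are listed rightmost first: the new leaf lies left of the rightmost child, is the
new rightmost child, or lies inside the rightmost child. -/
lemma AppendLeaf.cases_head {S U : OTree} (h : AppendLeaf S U) :
    (∃ s ts us, S = node (s :: ts) ∧ U = node (s :: us) ∧ AppendLeaf (node ts) (node us)) ∨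
    (∃ ts, S = node ts ∧ U = node (node [] :: ts)) ∨
    (∃ t t' r, S = node (t :: r) ∧ U = node (t' :: r) ∧ AppendLeaf t t') := by
  cases h with
  | root l r =>
    rcases l with _ | ⟨s, l⟩
    · exact Or.inr (Or.inl ⟨r, rfl, rfl⟩)
    · exact Or.inl ⟨s, _, _, rfl, rfl, AppendLeaf.root l r⟩
  | child l r t t' h =>
    rcases l with _ | ⟨s, l⟩
    · exact Or.inr (Or.inr ⟨t, t', r, rfl, rfl, h⟩)
    · exact Or.inl ⟨s, _, _, rfl, rfl, AppendLeaf.child l r t t' h⟩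

/-- The side condition excludes the case where the new leaf of `U` shortens the rightmost path
to fewer than `b` edges: then `C U b` hangs its leaf below that new leaf. -/
theorem AppendLeaf.C_C {S U : OTree} (h : AppendLeaf S U) {b : ℕ} (hb : 1 ≤ b)
    (hbS : b ≤ rpl S + 1) (hbU : b ≤ rpl U + 1) (hside : b ≤ rpl U ∨ rpl S ≤ rpl U) :
    AppendLeaf (C S b) (C U b) := by
  induction b, hb using Nat.le_induction generalizing S U with
  | base =>
    obtain ⟨ts⟩ := S
    obtain ⟨us⟩ := U
    rw [C_one, C_one]
    exact h.cons _
  | succ k hk ih =>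
    rcases h.cases_head with
      ⟨s, ts, us, rfl, rfl, h'⟩ | ⟨ts, rfl, rfl⟩ | ⟨t, t', r, rfl, rfl, h'⟩
    · rw [C_node_cons_succ _ _ hk, C_node_cons_succ _ _ hk]
      exact h'.cons _
    · simp only [rpl_node_cons, rpl_node_nil] at hbU hside
      obtain rfl : k = 1 := by omega
      rcases ts with _ | ⟨t, rt⟩
      · simp at hbS
      obtain rfl : t = node [] := rpl_eq_zero_iff.1 (by simp at hside; omega)
      exact (AppendLeaf.root [] rt).cons _
    · simp only [rpl_node_cons] at hbS hbU hside
      rw [C_node_cons_succ _ _ hk, C_node_cons_succ _ _ hk]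
      exact AppendLeaf.child [] r _ _ (ih h' (by omega) (by omega) (by omega))

lemma AppendLeaf.copying_C {S U : OTree} (h : AppendLeaf S U) {b : ℕ} (hb : 1 ≤ b)
    (hbS : b ≤ rpl S + 1) (hbU : b ≤ rpl U + 1) (hside : b ≤ rpl U ∨ rpl S ≤ rpl U)
    (hne : U ≠ C S b) : Copying U (C S b) :=
  ⟨b, hne, hb, hbU, rpl_C hb hbS, h.C_C hb hbS hbU hside⟩

namespace OTree

lemma copying_C_C_of_lt {T : OTree} {x y : ℕ} (hy : 1 ≤ y) (hyx : y < x)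
    (hx : x ≤ rpl T + 1) :
    Copying (C T x) (C T y) := by
  have hrx : rpl (C T x) = x := rpl_C (by omega) hx
  refine (appendLeaf_C (by omega) hx).copying_C hy (by omega) (by omega) (by omega) ?_
  intro h
  rw [h, rpl_C hy (by omega)] at hrx
  omega

lemma delApp_C_C (T : OTree) {x y : ℕ} (hx1 : 1 ≤ x) (hx : x ≤ rpl T + 1) (hy1 : 1 ≤ y)
    (hy : y ≤ rpl T + 1) : DelApp (C T x) (C T y) :=
  ⟨T, appendLeaf_C hx1 hx, appendLeaf_C hy1 hy⟩

end OTree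

namespace Copying

variable {T T' : OTree} {w : ℕ}

lemma rpl_bounds (hc : Copying T T') : 1 ≤ rpl T' ∧ rpl T' ≤ rpl T + 1 := by
  obtain ⟨j, -, h1, h2, rfl, -⟩ := hc
  exact ⟨h1, h2⟩

theorem C_C (hc : Copying T T') (hw1 : 1 ≤ w) (hw : w ≤ rpl T' + 1) :
    Copying (C T (rpl T')) (C T' w) := by
  obtain ⟨j, hne, hj1, hj, rfl, hal⟩ := hc
  refine hal.copying_C hw1 hw (by rw [rpl_C hj1 hj]; omega) (by rw [rpl_C hj1 hj]; omega) ?_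
  intro h
  apply hne
  rw [← p_C (T := T) hj1 hj, h, p_C hw1 hw]

theorem delApp_C (hc : Copying T T') (hw1 : 1 ≤ w) (hw : w ≤ rpl T' + 1) :
    DelApp (C T (rpl T')) (C T' w) := by
  obtain ⟨j, -, -, -, rfl, hal⟩ := hc
  exact ⟨T', hal, appendLeaf_C hw1 hw⟩

end Copying

namespace OTree

/-- `CopyChain po T Ts`: consecutive trees of `T :: Ts` are related by `DelApp` and one of
them copies the other. The pin `po = some f` says that the block of children of `T` must
begin with `C T f`; it is set when `T` is copying its predecessor, which forces the block
to begin at the predecessor's `rpl`. Dually, when `T` copies its successor `T'`, the block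
of `T` must end with `C T (rpl T')`, whence `hpin`. -/
inductive CopyChain : Option ℕ → OTree → List OTree → Prop
  | single (po : Option ℕ) (T : OTree) : CopyChain po T []
  | consCopying {po : Option ℕ} {T T' : OTree} {L : List OTree} (hc : Copying T T')
      (hd : DelApp T T') (hpin : ∀ f ∈ po, f ≠ rpl T') (ht : CopyChain none T' L) :
      CopyChain po T (T' :: L)
  | consCopied {po : Option ℕ} {T T' : OTree} {L : List OTree} (hc : Copying T' T)
      (hd : DelApp T T') (ht : CopyChain (some (rpl T)) T' L) : CopyChain po T (T' :: L)

theorem CopyChain.isChain {po : Option ℕ} {T : OTree} {L : List OTree} (h : CopyChain po T L) :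
    (T :: L).IsChain DelApp := by
  induction h with
  | single => exact List.isChain_singleton _
  | consCopying _ hd _ _ ih => exact List.isChain_cons_cons.2 ⟨hd, ih⟩
  | consCopied _ hd _ ih => exact List.isChain_cons_cons.2 ⟨hd, ih⟩

theorem copyChain_C_cons {T : OTree} {x y : ℕ} {R : List OTree} {q : Option ℕ}
    (hx1 : 1 ≤ x) (hx : x ≤ rpl T + 1) (hy1 : 1 ≤ y) (hy : y ≤ rpl T + 1) (hxy : x ≠ y)
    (hq : y < x → ∀ f ∈ q, f ≠ y) (hdown : y < x → CopyChain none (C T y) R)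
    (hup : x < y → CopyChain (some x) (C T y) R) : CopyChain q (C T x) (C T y :: R) := by
  rcases Nat.lt_or_gt_of_ne hxy with hlt | hlt
  · refine .consCopied (copying_C_C_of_lt hx1 hlt hy) (delApp_C_C T hx1 hx hy1 hy) ?_
    rw [rpl_C hx1 hx]
    exact hup hlt
  · refine .consCopying (copying_C_C_of_lt hy1 hlt hx) (delApp_C_C T hx1 hx hy1 hy) ?_ (hdown hlt)
    rw [rpl_C hy1 hy]
    exact hq hlt

/-- Only a descent at the first step restricts the pin: later pins are earlier levels of the
block, so they differ from the next level. -/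
theorem copyChain_block {T : OTree} {z : ℕ} {R : List OTree}
    (hR : ∀ q : Option ℕ, (∀ f ∈ q, f < z) → CopyChain q (C T z) R) :
    ∀ (ys : List ℕ) (x : ℕ), (x :: ys ++ [z]).Nodup →
      (∀ y ∈ x :: ys ++ [z], 1 ≤ y ∧ y ≤ rpl T + 1) →
      ∀ q : Option ℕ, (ys.headD z < x → ∀ f ∈ q, f ≠ ys.headD z) →
      CopyChain q (C T x) (ys.map (C T) ++ C T z :: R)
  | [], x, hnd, hb, q, hq => by
    have hx := hb x (by simp)
    have hz := hb z (by simp)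
    refine copyChain_C_cons hx.1 hx.2 hz.1 hz.2 (by simpa using hnd) hq
      (fun _ => hR none (by simp)) (fun h => hR (some x) (by simpa using h))
  | y :: ys, x, hnd, hb, q, hq => by
    have hx := hb x (by simp)
    have hy := hb y (by simp)
    have hnd' : (y :: ys ++ [z]).Nodup := (List.nodup_cons.1 hnd).2
    refine copyChain_C_cons hx.1 hx.2 hy.1 hy.2 (by simp at hnd; tauto) hq
      (fun _ => copyChain_block hR ys y hnd' (fun v hv => hb v (by simp_all)) none (by simp))
      (fun _ => copyChain_block hR ys y hnd' (fun v hv => hb v (by simp_all)) (some x) ?_)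
    intro _ f hf
    cases hf
    have : x ∉ ys ++ [z] := by simp at hnd ⊢; tauto
    rcases ys with _ | ⟨y', ys⟩ <;> simp_all

/-- Unpinned blocks start at level at least `rpl T`: if the predecessor `S` of `T` copies `T`,
the block of `S` ends with `C S (rpl T)`, whose pin is a smaller level and so never equals the
first level of the block of `T` (condition `hpin`). -/
def IsStart (po : Option ℕ) (T : OTree) (w : ℕ) : Prop :=
  1 ≤ w ∧ w ≤ rpl T + 1 ∧ (∀ f ∈ po, w = f) ∧ (po = none → rpl T ≤ w)

/-- `v` is the second level of the block of `T`; when the block descends from `w` to `v`,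
the pin `v` is excluded. -/
def Lifts (po : Option ℕ) (T : OTree) (Ts : List OTree) : Prop :=
  ∃ w v R, IsStart po T w ∧ (C T w :: R).Perm ((T :: Ts).flatMap children) ∧
    ∀ q : Option ℕ, (v < w → ∀ f ∈ q, f ≠ v) → CopyChain q (C T w) R

lemma exists_isStart {T : OTree} (hT : 1 ≤ rpl T) {po : Option ℕ}
    (hpo : ∀ f ∈ po, 1 ≤ f ∧ f ≤ rpl T + 1) (a : ℕ) (ha : ∀ f ∈ po, f ≠ a) :
    ∃ x, IsStart po T x ∧ x ≠ a := by
  cases po with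
  | none =>
    by_cases h : a = rpl T + 1
    · exact ⟨rpl T, ⟨hT, by omega, by simp, fun _ => le_rfl⟩, by omega⟩
    · exact ⟨rpl T + 1, ⟨by omega, le_rfl, by simp, fun _ => by omega⟩, h ∘ Eq.symm⟩
  | some f =>
    have hf := hpo f rfl
    exact ⟨f, ⟨hf.1, hf.2, by simp, by simp⟩, ha f rfl⟩

theorem lifts_of_block {po : Option ℕ} {T : OTree} {Ts R : List OTree} {x z : ℕ}
    (hx : IsStart po T x) (hz1 : 1 ≤ z) (hz : z ≤ rpl T + 1) (hxz : x ≠ z)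
    (hR : R.Perm (Ts.flatMap children))
    (hRc : ∀ q : Option ℕ, (∀ f ∈ q, f < z) → CopyChain q (C T z) R) : Lifts po T Ts := by
  have ⟨hx1, hx2, _, _⟩ := hx
  set ys := ((List.range' 1 (rpl T + 1)).erase x).erase z
  have hperm : (x :: ys ++ [z]).Perm (List.range' 1 (rpl T + 1)) := by
    have hxm : x ∈ List.range' 1 (rpl T + 1) := List.mem_range'_1.2 (by omega)
    have hzm : z ∈ (List.range' 1 (rpl T + 1)).erase x :=
      (List.mem_erase_of_ne (Ne.symm hxz)).2 (List.mem_range'_1.2 (by omega))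
    exact (((List.perm_append_singleton z ys).trans (List.perm_cons_erase hzm).symm).cons x).trans
      (List.perm_cons_erase hxm).symm
  refine ⟨x, ys.headD z, ys.map (C T) ++ C T z :: R, hx, ?_, ?_⟩
  · have : C T x :: (ys.map (C T) ++ C T z :: R) = (x :: ys ++ [z]).map (C T) ++ R := by simp
    rw [this, List.flatMap_cons]
    exact (hperm.map (C T)).append hR
  · refine copyChain_block hRc ys x (hperm.nodup_iff.2 List.nodup_range') (fun y hy => ?_)
    have := List.mem_range'_1.1 (hperm.mem_iff.1 hy)
    omega

theorem CopyChain.lifts {po : Option ℕ} {T : OTree} {Ts : List OTree} (h : CopyChain po T Ts)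
    (hrpl : ∀ S ∈ T :: Ts, 1 ≤ rpl S) (hpo : ∀ f ∈ po, 1 ≤ f ∧ f ≤ rpl T + 1) :
    Lifts po T Ts := by
  induction h with
  | single po T =>
    have hT := hrpl T (by simp)
    obtain ⟨x, hx, -⟩ :=
      exists_isStart hT hpo 0 fun f hf => Nat.one_le_iff_ne_zero.1 (hpo f hf).1
    obtain ⟨z, ⟨hz1, hz, -, -⟩, hzx⟩ := exists_isStart (po := none) hT (by simp) x (by simp)
    exact lifts_of_block hx hz1 hz (Ne.symm hzx) (by simp) fun q _ => .single q _
  | @consCopying po T T' L hc _ hpin _ ih =>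
    obtain ⟨w, v, R, ⟨hw1, hw, -, hwT⟩, hperm, hchain⟩ :=
      ih (fun S hS => hrpl S (by simp_all)) (by simp)
    have ⟨he1, he⟩ := hc.rpl_bounds
    obtain ⟨x, hx, hxe⟩ := exists_isStart (hrpl T (by simp)) hpo (rpl T') hpin
    refine lifts_of_block hx he1 he hxe (by simpa using hperm) fun q hq => ?_
    refine .consCopying (hc.C_C hw1 hw) (hc.delApp_C hw1 hw) (fun f hf => ?_)
      (hchain none (by simp))
    rw [rpl_C hw1 hw]
    exact ((hq f hf).trans_le (hwT rfl)).ne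
  | @consCopied po T T' L hc _ _ ih =>
    have ⟨hT1, hT⟩ := hc.rpl_bounds
    obtain ⟨w, v, R, ⟨-, -, hwT, -⟩, hperm, hchain⟩ :=
      ih (fun S hS => hrpl S (by simp_all)) (by simpa using ⟨hT1, hT⟩)
    obtain rfl := hwT _ rfl
    obtain ⟨x, hx, -⟩ :=
      exists_isStart hT1 hpo 0 fun f hf => Nat.one_le_iff_ne_zero.1 (hpo f hf).1
    obtain ⟨z, ⟨hz1, hz, -, hzT⟩, hzx⟩ :=
      exists_isStart (po := none) hT1 (by simp) x (by simp)
    refine lifts_of_block hx hz1 hz (Ne.symm hzx) (by simpa using hperm) fun q _ => ?_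
    refine .consCopied (hc.C_C hz1 hz) (hc.delApp_C hz1 hz).symm ?_
    rw [rpl_C hz1 hz]
    refine hchain _ fun hv f hf => ?_
    cases hf
    exact (hv.trans_le (hzT rfl)).ne'

theorem exists_copyChain {n : ℕ} (hn : 2 ≤ n) :
    ∃ T Ts, CopyChain none T Ts ∧ (T :: Ts).Nodup ∧ ∀ U, U ∈ T :: Ts ↔ size U = n := by
  induction n, hn using Nat.le_induction with
  | base =>
    refine ⟨node [node []], [], .single _ _, by simp, ?_⟩
    exact mem_flatMap_children_iff le_rfl (L := [node []])
      fun S => by rw [List.mem_singleton, size_eq_one_iff]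
  | succ n hn ih =>
    obtain ⟨T, Ts, hc, hnd, hmem⟩ := ih
    obtain ⟨w, v, R, -, hperm, hchain⟩ :=
      hc.lifts (fun S hS => one_le_rpl_of_two_le_size ((hmem S).1 hS ▸ hn)) (by simp)
    exact ⟨C T w, R, hchain none (by simp), hperm.nodup_iff.2 (nodup_flatMap_children hnd),
      fun U => hperm.mem_iff.trans (mem_flatMap_children_iff (by omega) hmem U)⟩

end OTree

/-- For every `n ≥ 1` there exists an ordering of all ordered trees with
exactly `n` vertices such that each tree is obtained from the preceding one by
deleting one leaf and appending one leaf elsewhere (a Gray code). -/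
theorem stmt_19 (n : ℕ) (hn : 1 ≤ n) :
    ∃ l : List OTree, l.Nodup ∧ (∀ T : OTree, T ∈ l ↔ T.size = n) ∧
      l.Chain' DelApp := by
  obtain rfl | h2 := hn.eq_or_lt
  · exact ⟨[OTree.node []], by simp,
      fun T => by rw [List.mem_singleton, OTree.size_eq_one_iff], List.isChain_singleton _⟩
  · obtain ⟨T, Ts, hc, hnd, hmem⟩ := OTree.exists_copyChain h2
    exact ⟨T :: Ts, hnd, hmem, hc.isChain⟩
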